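/- arXiv:1601.06039 — 9 statements merged into one kernel-verified Lean document; each statement's English description precedes it below -/
import Mathlib

section
/- Let t be a probability distribution on {1,...,n} with all t_i > 0, and let M ≥ n be a positive integer. If p is an M-type distribution (i.e., p_i = c_i/M with c_i nonnegative integers summing to M) minimizing the informational divergence D(t‖p) = Σ_i t_i log(t_i/p_i) over all M-type distributions, then the support of p equals the support of t, i.e., p_i = 0 if and only if t_i = 0. -/
open Finset

/-- Informational divergence D(t‖p) with the convention D = ⊤ if some t i > 0 but p i = 0. -/
noncomputable def Dkl {n : ℕ} (t p : Fin n → ℝ) : EReal :=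
  if ∀ i, 0 < t i → 0 < p i then
    ((∑ i, if 0 < t i then t i * Real.log (t i / p i) else 0 : ℝ) : EReal)
  else ⊤

theorem support_of_optimal_Mtype_approx
    {n M : ℕ} (hn : 0 < n) (hM : n ≤ M)
    (t : Fin n → ℝ) (ht_pos : ∀ i, 0 < t i) (ht_sum : ∑ i, t i = 1)
    (c : Fin n → ℕ) (hc : ∑ i, c i = M)
    (p : Fin n → ℝ) (hp : ∀ i, p i = (c i : ℝ) / M)
    (hopt : ∀ c' : Fin n → ℕ, ∑ i, c' i = M →
      Dkl t p ≤ Dkl t (fun i => (c' i : ℝ) / M)) :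
    ∀ i, p i = 0 ↔ t i = 0 := by
  have hM0 : 0 < M := lt_of_lt_of_le hn hM
  intro i
  constructor
  · intro hpi
    exfalso
    have hDp : Dkl t p = ⊤ := by
      unfold Dkl
      rw [if_neg]
      push_neg
      exact ⟨i, ht_pos i, by rw [hpi]⟩
    set i0 : Fin n := ⟨0, hn⟩
    set c' : Fin n → ℕ := fun j => 1 + (if j = i0 then M - n else 0) with hc'
    have hsum : ∑ j, c' j = M := by
      simp only [hc', Finset.sum_add_distrib, Finset.sum_const, Finset.card_univ,
        Fintype.card_fin, smul_eq_mul, mul_one, Finset.sum_ite_eq' Finset.univ i0,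
        Finset.mem_univ, if_true]
      omega
    have hfin : Dkl t (fun j => (c' j : ℝ) / M) ≠ ⊤ := by
      unfold Dkl
      rw [if_pos]
      · exact EReal.coe_ne_top _
      · intro j _
        apply div_pos
        · have : 0 < c' j := by simp [hc']
          exact_mod_cast this
        · exact_mod_cast hM0
    have := hopt c' hsum
    rw [hDp, top_le_iff] at this
    exact hfin this
  · intro h
    exact absurd h (ne_of_gt (ht_pos i))
end

section
/- Let δ_1, ..., δ_n : ℕ → ℝ be non-decreasing functions and M a positive integer. Then the minimum over all allocations c = (c_1,...,c_n) ∈ ℕ₀^n with Σ c_i = M of U(c) = Σ_{i=1}^n Σ_{k=1}^{c_i} δ_i(k) equals the sum of the M smallest values (with multiplicity) in the multiset {δ_i(k) : 1 ≤ i ≤ n, k ≥ 1}. -/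
open Finset

/-- Cost of an allocation: U(c) = ∑_i ∑_{k=1}^{c_i} δ_i(k). -/
noncomputable def allocCost {n : ℕ} (δ : Fin n → ℕ → ℝ) (c : Fin n → ℕ) : ℝ :=
  ∑ i, ∑ k ∈ Finset.Icc 1 (c i), δ i k

/-- If `A` and `B` have the same size and every value of `f` on `A \ B` is at most every
value of `f` on `B \ A`, then the sum over `A` is at most the sum over `B`. -/
lemma sum_le_of_cross {α : Type*} [DecidableEq α] (A B : Finset α) (f : α → ℝ)
    (hcard : A.card = B.card)
    (h : ∀ a ∈ A \ B, ∀ b ∈ B \ A, f a ≤ f b) :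
    ∑ a ∈ A, f a ≤ ∑ b ∈ B, f b := by
  have hd : (A \ B).card = (B \ A).card := by
    have h1 := Finset.card_inter_add_card_sdiff A B
    have h2 := Finset.card_inter_add_card_sdiff B A
    rw [Finset.inter_comm] at h2
    omega
  rcases (A \ B).eq_empty_or_nonempty with he | hne
  · have hAB : A = B := by
      apply Finset.eq_of_subset_of_card_le _ (le_of_eq hcard.symm)
      intro a ha
      by_contra hb
      exact (Finset.notMem_empty a) (he ▸ Finset.mem_sdiff.mpr ⟨ha, hb⟩)
    rw [hAB]
  · have hne' : (B \ A).Nonempty := by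
      rw [← Finset.card_pos, ← hd, Finset.card_pos]; exact hne
    obtain ⟨b0, hb0, hb0min⟩ := Finset.exists_min_image (B \ A) f hne'
    have key : ∑ a ∈ A \ B, f a ≤ ∑ b ∈ B \ A, f b := by
      calc ∑ a ∈ A \ B, f a ≤ (A \ B).card • f b0 :=
            Finset.sum_le_card_nsmul _ _ _ (fun a ha => h a ha b0 hb0)
        _ = (B \ A).card • f b0 := by rw [hd]
        _ ≤ ∑ b ∈ B \ A, f b := Finset.card_nsmul_le_sum _ _ _ (fun b hb => hb0min b hb)
    have hA := Finset.sum_inter_add_sum_sdiff A B f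
    have hB := Finset.sum_inter_add_sum_sdiff B A f
    rw [Finset.inter_comm] at hB
    linarith

lemma sum_eq_of_cross {α : Type*} [DecidableEq α] (A B : Finset α) (f : α → ℝ)
    (hcard : A.card = B.card)
    (h : ∀ a ∈ A \ B, ∀ b ∈ B \ A, f a = f b) :
    ∑ a ∈ A, f a = ∑ b ∈ B, f b := by
  refine le_antisymm (sum_le_of_cross A B f hcard fun a ha b hb => (h a ha b hb).le)
    (sum_le_of_cross B A f hcard.symm fun b hb a ha => (h a ha b hb).ge)

theorem greedy_min_eq_sum_of_M_smallest
    {n M : ℕ} (hM : 0 < M)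
    (δ : Fin n → ℕ → ℝ)
    (hδ : ∀ i, ∀ k l : ℕ, 1 ≤ k → k ≤ l → δ i k ≤ δ i l)
    (S : Finset (Fin n × ℕ))
    (hS1 : ∀ x ∈ S, 1 ≤ x.2)
    (hScard : S.card = M)
    (hSmall : ∀ x ∈ S, ∀ y : Fin n × ℕ, 1 ≤ y.2 → y ∉ S → δ x.1 x.2 ≤ δ y.1 y.2) :
    IsLeast {u : ℝ | ∃ c : Fin n → ℕ, ∑ i, c i = M ∧ allocCost δ c = u}
      (∑ x ∈ S, δ x.1 x.2) := by
  classical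
  -- A generic lower bound: any allocation costs at least ∑_{x∈S} δ x.
  have lower : ∀ c : Fin n → ℕ, (∑ i, c i = M) →
      ∑ x ∈ S, δ x.1 x.2 ≤ allocCost δ c := by
    intro c hc
    set T : Finset (Fin n × ℕ) :=
      (Finset.univ.sigma (fun i : Fin n => Finset.Icc 1 (c i))).map
        (Equiv.sigmaEquivProd (Fin n) ℕ).toEmbedding with hT
    have hmemT : ∀ p : Fin n × ℕ, p ∈ T ↔ p.2 ∈ Finset.Icc 1 (c p.1) := by
      intro p
      rcases p with ⟨i, k⟩
      constructor
      · intro hp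
        simp only [hT, Finset.mem_map, Finset.mem_sigma, Finset.mem_univ, true_and,
          Equiv.coe_toEmbedding, Equiv.sigmaEquivProd_apply] at hp
        obtain ⟨⟨j, m⟩, hm, heq⟩ := hp
        cases heq
        exact hm
      · intro hk
        simp only [hT, Finset.mem_map, Finset.mem_sigma, Finset.mem_univ, true_and,
          Equiv.coe_toEmbedding, Equiv.sigmaEquivProd_apply]
        exact ⟨⟨i, k⟩, hk, rfl⟩
    have hTcard : T.card = M := by
      rw [hT, Finset.card_map, Finset.card_sigma]
      simp [Nat.card_Icc, hc]
    have hTsum : allocCost δ c = ∑ x ∈ T, δ x.1 x.2 := by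
      rw [hT, Finset.sum_map, Finset.sum_sigma]
      rfl
    rw [hTsum]
    apply sum_le_of_cross S T _ (by rw [hScard, hTcard])
    intro a ha b hb
    rw [Finset.mem_sdiff] at ha hb
    have hb2 : 1 ≤ b.2 := (Finset.mem_Icc.mp ((hmemT b).mp hb.1)).1
    exact hSmall a ha.1 b hb2 hb.2
  constructor
  · -- membership: the allocation induced by S achieves the value
    set c : Fin n → ℕ := fun i => (S.filter fun x => x.1 = i).card with hcdef
    have hcsum : ∑ i, c i = M := by
      rw [← hScard]
      exact (Finset.card_eq_sum_card_fiberwise (f := Prod.fst) (t := Finset.univ)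
        (fun x _ => Finset.mem_univ _)).symm
    refine ⟨c, hcsum, ?_⟩
    have hrow : ∀ i : Fin n,
        ∑ k ∈ Finset.Icc 1 (c i), δ i k
          = ∑ x ∈ S.filter (fun x => x.1 = i), δ x.1 x.2 := by
      intro i
      set B : Finset ℕ := (S.filter fun x => x.1 = i).image Prod.snd with hBdef
      have hBmem : ∀ k, k ∈ B ↔ (i, k) ∈ S := by
        intro k
        simp only [hBdef, Finset.mem_image, Finset.mem_filter]
        constructor
        · rintro ⟨x, ⟨hx, hx1⟩, hx2⟩
          have : x = (i, k) := by
            cases x; simp_all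
          rwa [this] at hx
        · intro h; exact ⟨(i, k), ⟨h, rfl⟩, rfl⟩
      have hBcard : B.card = c i := by
        rw [hBdef, hcdef]
        apply Finset.card_image_of_injOn
        intro x hx y hy hxy
        simp only [Finset.mem_coe, Finset.mem_filter] at hx hy
        exact Prod.ext (hx.2.trans hy.2.symm) hxy
      have hstep : ∑ k ∈ Finset.Icc 1 (c i), δ i k = ∑ k ∈ B, δ i k := by
        apply sum_eq_of_cross
        · rw [Nat.card_Icc, hBcard]; omega
        · intro a ha b hb
          rw [Finset.mem_sdiff, Finset.mem_Icc] at ha hb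
          have hbS : (i, b) ∈ S := (hBmem b).mp hb.1
          have haS : (i, a) ∉ S := fun h => ha.2 ((hBmem a).mpr h)
          have hb1 : 1 ≤ b := hS1 _ hbS
          have hab : a ≤ b := by
            rcases Nat.lt_or_ge (c i) b with h | h
            · omega
            · exact absurd ⟨hb1, h⟩ hb.2
          exact le_antisymm (hδ i a b ha.1.1 hab) (hSmall (i, b) hbS (i, a) ha.1.1 haS)
      rw [hstep, hBdef, Finset.sum_image]
      · apply Finset.sum_congr rfl
        intro x hx
        rw [Finset.mem_filter] at hx
        rw [hx.2]
      · intro x hx y hy hxy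
        simp only [Finset.mem_coe, Finset.mem_filter] at hx hy
        exact Prod.ext (hx.2.trans hy.2.symm) hxy
    show allocCost δ c = _
    rw [allocCost]
    calc ∑ i, ∑ k ∈ Finset.Icc 1 (c i), δ i k
        = ∑ i, ∑ x ∈ S.filter (fun x => x.1 = i), δ x.1 x.2 := by
          exact Finset.sum_congr rfl fun i _ => hrow i
      _ = ∑ x ∈ S, δ x.1 x.2 :=
          Finset.sum_fiberwise_of_maps_to (fun x _ => Finset.mem_univ x.1) _
  · rintro u ⟨c, hc, rfl⟩
    exact lower c hc
end

section
/- Let f_1,...,f_n : ℝ → ℝ be convex functions and M a positive integer. The greedy algorithm, which starts from the zero allocation and M times increments an index j minimizing f_j(k_j+1) - f_j(k_j), produces an allocation c with Σ c_i = M that globally minimizes Σ_{i=1}^n f_i(c_i) over all nonnegative integer allocations summing to M. -/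
open Finset

/-- For a convex function, marginal increments are nondecreasing. -/
lemma marg_mono_real {f : ℝ → ℝ} (hf : ConvexOn ℝ Set.univ f) {a b : ℝ}
    (hab : a + 1 ≤ b) : f (a + 1) - f a ≤ f (b + 1) - f b := by
  rcases eq_or_lt_of_le hab with h | h
  · have h1 := hf.slope_mono_adjacent (Set.mem_univ a) (Set.mem_univ (b + 1))
      (show a < b by linarith) (show b < b + 1 by linarith)
    rw [← h] at h1
    have e1 : a + 1 - a = (1 : ℝ) := by ring
    have e2 : a + 1 + 1 - (a + 1) = (1 : ℝ) := by ring
    rw [e1, e2, div_one, div_one] at h1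
    rw [← h]
    linarith
  · have h1 := hf.slope_mono_adjacent (Set.mem_univ a) (Set.mem_univ b)
      (show a < a + 1 by linarith) h
    have h2 := hf.slope_mono_adjacent (Set.mem_univ (a + 1)) (Set.mem_univ (b + 1))
      h (show b < b + 1 by linarith)
    have e1 : a + 1 - a = (1 : ℝ) := by ring
    have e2 : b + 1 - b = (1 : ℝ) := by ring
    rw [e1, div_one] at h1
    rw [e2, div_one] at h2
    have hba : (0 : ℝ) < b - (a + 1) := by linarith
    calc f (a + 1) - f a ≤ (f b - f (a + 1)) / (b - (a + 1)) := h1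
      _ ≤ f (b + 1) - f b := h2

lemma sum_split {n : ℕ} {β : Type*} [AddCommMonoid β] (i j : Fin n) (hij : i ≠ j)
    (g : Fin n → β) :
    ∑ x, g x = g i + g j + ∑ x ∈ (univ.erase i).erase j, g x := by
  rw [← Finset.add_sum_erase _ g (mem_univ i),
    ← Finset.add_sum_erase _ g (Finset.mem_erase.mpr ⟨Ne.symm hij, mem_univ j⟩), ← add_assoc]

theorem greedy_minimizes_convex_sum
    {n M : ℕ} (f : Fin n → ℝ → ℝ)
    (hf : ∀ i, ConvexOn ℝ Set.univ (f i))
    (k : ℕ → Fin n → ℕ)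
    (hk0 : k 0 = fun _ => 0)
    (hstep : ∀ s < M, ∃ j : Fin n,
      k (s + 1) = Function.update (k s) j (k s j + 1) ∧
      ∀ i : Fin n,
        f j ((k s j : ℝ) + 1) - f j (k s j : ℝ) ≤
          f i ((k s i : ℝ) + 1) - f i (k s i : ℝ)) :
    ∑ i, k M i = M ∧
      ∀ c : Fin n → ℕ, ∑ i, c i = M →
        ∑ i, f i (k M i : ℝ) ≤ ∑ i, f i (c i : ℝ) := by
  -- marginal cost of the t-th unit for index i
  set δ : Fin n → ℕ → ℝ := fun i t => f i ((t : ℝ) + 1) - f i (t : ℝ) with hδ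
  have hmono : ∀ i : Fin n, ∀ a b : ℕ, a ≤ b → δ i a ≤ δ i b := by
    intro i a b hab
    rcases eq_or_lt_of_le hab with rfl | h
    · exact le_rfl
    · exact marg_mono_real (hf i) (by exact_mod_cast Nat.succ_le_of_lt h)
  -- sums along the greedy path
  have hsum : ∀ s, s ≤ M → ∑ i, k s i = s := by
    intro s
    induction s with
    | zero => intro _; simp [hk0]
    | succ s ih =>
      intro hs
      obtain ⟨j, hupd, _⟩ := hstep s (by omega)
      rw [hupd, Finset.sum_update_of_mem (mem_univ j)]
      have h2 := Finset.add_sum_erase univ (k s) (mem_univ j)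
      have h3 := ih (by omega)
      simp only [Finset.sdiff_singleton_eq_erase] at *
      omega
  -- exchange invariant along the greedy path
  have hinv : ∀ s, s ≤ M → ∀ i j : Fin n, 0 < k s i → δ i (k s i - 1) ≤ δ j (k s j) := by
    intro s
    induction s with
    | zero => intro _ i j hi; rw [hk0] at hi; simp at hi
    | succ s ih =>
      intro hs i j hi
      obtain ⟨j0, hupd, hmin⟩ := hstep s (by omega)
      have ih' := ih (by omega)
      have hminδ : ∀ i : Fin n, δ j0 (k s j0) ≤ δ i (k s i) := fun i => hmin i
      rw [hupd] at hi ⊢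
      by_cases hij0 : i = j0
      · subst hij0
        rw [Function.update_self] at hi ⊢
        have he : k s i + 1 - 1 = k s i := by omega
        rw [he]
        by_cases hjj0 : j = i
        · subst hjj0
          rw [Function.update_self]
          exact hmono j (k s j) (k s j + 1) (by omega)
        · rw [Function.update_of_ne hjj0]
          exact hminδ j
      · rw [Function.update_of_ne hij0] at hi ⊢
        by_cases hjj0 : j = j0
        · subst hjj0
          rw [Function.update_self]
          exact le_trans (ih' i j hi) (hmono j (k s j) (k s j + 1) (by omega))
        · rw [Function.update_of_ne hjj0]
          exact ih' i j hi
  have hinvM := hinv M le_rfl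
  refine ⟨hsum M le_rfl, ?_⟩
  -- optimality by induction on the L1 distance to the greedy allocation
  have main : ∀ D : ℕ, ∀ c : Fin n → ℕ, ∑ i, c i = M →
      (∑ i, ((k M i - c i) + (c i - k M i))) ≤ D →
      ∑ i, f i (k M i : ℝ) ≤ ∑ i, f i (c i : ℝ) := by
    intro D
    induction D with
    | zero =>
      intro c hc hD
      have hz : ∀ i ∈ univ, ((k M i - c i) + (c i - k M i)) = 0 := by
        rw [← Finset.sum_eq_zero_iff]
        omega
      have : ∀ i, c i = k M i := by
        intro i
        have := hz i (mem_univ i)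
        omega
      simp only [this]
      exact le_rfl
    | succ D ih =>
      intro c hc hD
      by_cases hck : ∀ i, c i = k M i
      · simp only [hck]
        exact le_rfl
      · push_neg at hck
        obtain ⟨i0, hi0⟩ := hck
        have hkM := hsum M le_rfl
        have hex1 : ∃ i, c i < k M i := by
          by_contra h
          push_neg at h
          have := (Finset.sum_eq_sum_iff_of_le (fun i _ => h i)).mp
            (by rw [hc, hkM]) i0 (mem_univ i0)
          exact hi0 this.symm
        have hex2 : ∃ j, k M j < c j := by
          by_contra h
          push_neg at h
          have := (Finset.sum_eq_sum_iff_of_le (fun i _ => h i)).mp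
            (by rw [hc, hkM]) i0 (mem_univ i0)
          exact hi0 this
        obtain ⟨i, hi⟩ := hex1
        obtain ⟨j, hj⟩ := hex2
        have hij : i ≠ j := by intro h; rw [h] at hi; omega
        set c' : Fin n → ℕ := Function.update (Function.update c i (c i + 1)) j (c j - 1)
          with hc'def
        have hc'i : c' i = c i + 1 := by
          rw [hc'def, Function.update_of_ne hij, Function.update_self]
        have hc'j : c' j = c j - 1 := by
          rw [hc'def, Function.update_self]
        have hc'x : ∀ x, x ≠ i → x ≠ j → c' x = c x := by
          intro x hxi hxj
          rw [hc'def, Function.update_of_ne hxj, Function.update_of_ne hxi]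
        -- sum of c'
        have hsplitc' : ∀ {β : Type} [AddCommMonoid β] (g : Fin n → ℕ → β),
            ∑ x, g x (c' x) = g i (c i + 1) + g j (c j - 1)
              + ∑ x ∈ (univ.erase i).erase j, g x (c x) := by
          intro β _ g
          rw [sum_split i j hij (fun x => g x (c' x)), hc'i, hc'j]
          congr 1
          refine Finset.sum_congr rfl ?_
          intro x hx
          rw [Finset.mem_erase, Finset.mem_erase] at hx
          rw [hc'x x hx.2.1 hx.1]
        have hsplitc : ∀ {β : Type} [AddCommMonoid β] (g : Fin n → ℕ → β),
            ∑ x, g x (c x) = g i (c i) + g j (c j)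
              + ∑ x ∈ (univ.erase i).erase j, g x (c x) :=
          fun g => sum_split i j hij (fun x => g x (c x))
        have hsum' : ∑ x, c' x = M := by
          rw [hsplitc' (fun _ t => t)]
          rw [hsplitc (fun _ t => t)] at hc
          omega
        have hdist : (∑ x, ((k M x - c' x) + (c' x - k M x))) ≤ D := by
          rw [hsplitc' (fun x t => (k M x - t) + (t - k M x))]
          rw [hsplitc (fun x t => (k M x - t) + (t - k M x))] at hD
          omega
        -- cost comparison
        have hkey : δ i (c i) ≤ δ j (c j - 1) := by
          calc δ i (c i) ≤ δ i (k M i - 1) := hmono i _ _ (by omega)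
            _ ≤ δ j (k M j) := hinvM i j (by omega)
            _ ≤ δ j (c j - 1) := hmono j _ _ (by omega)
        have hcost : ∑ x, f x (c' x : ℝ) ≤ ∑ x, f x (c x : ℝ) := by
          rw [hsplitc' (fun x t => f x (t : ℝ)), hsplitc (fun x t => f x (t : ℝ))]
          have hcast : ((c j - 1 : ℕ) : ℝ) + 1 = ((c j : ℕ) : ℝ) := by
            have : c j - 1 + 1 = c j := by omega
            exact_mod_cast congrArg (Nat.cast : ℕ → ℝ) this
          have h1 : δ i (c i) = f i ((c i : ℝ) + 1) - f i (c i : ℝ) := rfl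
          have h2 : δ j (c j - 1) = f j (((c j - 1 : ℕ) : ℝ) + 1) - f j ((c j - 1 : ℕ) : ℝ) := rfl
          have h3 : ((c i + 1 : ℕ) : ℝ) = (c i : ℝ) + 1 := by push_cast; ring
          rw [h3]
          rw [h1, h2, hcast] at hkey
          linarith
        exact le_trans (ih c' hsum' hdist) hcost
  intro c hc
  exact main (∑ i, ((k M i - c i) + (c i - k M i))) c hc le_rfl
end

section
/- For the target distribution t = (1-ε, ε/(n-1), ..., ε/(n-1)) with 0 < ε < 1 and M = n, the optimal M-type approximation minimizing D(t‖p) is the uniform distribution p = (1/n,...,1/n), and the resulting divergence is D(t‖p) = log n - H(t), where H(t) = -Σ_i t_i log t_i. In particular, D(t‖p) → log n as ε → 0⁺. -/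
open Finset Filter

/-- Shannon entropy (in nats). -/
noncomputable def entropy {n : ℕ} (t : Fin n → ℝ) : ℝ :=
  -∑ i, if 0 < t i then t i * Real.log (t i) else 0

/-! The uniform distribution is the only `n`-type distribution `c / n` charging every point, and
every other one misses a point of a fully supported target, giving divergence `⊤`. Against the
uniform distribution, `D(t‖u) = ∑ tᵢ log (n tᵢ) = log n - H(t)`. Finally `H` is continuous on the
nonnegative orthant (it is a sum of `negMulLog`), and `t ε` tends to a point mass, of entropy `0`. -/

lemma Fintype.sum_ite_eq_add_mul {ι : Type*} [Fintype ι] [DecidableEq ι] (i₀ : ι) (a b : ℝ) :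
    ∑ i, (if i = i₀ then a else b) = a + (Fintype.card ι - 1 : ℝ) * b := by
  have : Nonempty ι := ⟨i₀⟩
  rw [Fintype.sum_eq_add_sum_compl i₀, if_pos rfl,
    Finset.sum_congr rfl fun i hi => if_neg (mem_compl.1 hi ∘ mem_singleton.2), sum_const,
    card_compl, card_singleton, nsmul_eq_mul, Nat.cast_sub Fintype.card_pos, Nat.cast_one]

lemma Fintype.eq_one_of_sum_eq_card {ι : Type*} [Fintype ι] {c : ι → ℕ}
    (hc : ∑ i, c i = Fintype.card ι) (hc0 : ∀ i, c i ≠ 0) (i : ι) : c i = 1 := by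
  have hle : ∀ i ∈ (univ : Finset ι), 1 ≤ c i := fun i _ => Nat.one_le_iff_ne_zero.2 (hc0 i)
  have hsum : ∑ _i : ι, 1 = ∑ i, c i := by simp [hc]
  exact ((sum_eq_sum_iff_of_le hle).1 hsum i (mem_univ i)).symm

lemma entropy_eq_sum_negMulLog {n : ℕ} {t : Fin n → ℝ} (ht : ∀ i, 0 ≤ t i) :
    entropy t = ∑ i, Real.negMulLog (t i) := by
  rw [entropy, ← sum_neg_distrib]
  refine sum_congr rfl fun i _ => ?_
  rcases (ht i).lt_or_eq with hi | hi
  · simp [hi, Real.negMulLog]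
  · simp [← hi]

lemma tendsto_entropy {α : Type*} {l : Filter α} {n : ℕ} {f : α → Fin n → ℝ} {q : Fin n → ℝ}
    (hf : Tendsto f l (nhds q)) (hf0 : ∀ᶠ x in l, ∀ i, 0 ≤ f x i) (hq : ∀ i, 0 ≤ q i) :
    Tendsto (fun x => entropy (f x)) l (nhds (entropy q)) := by
  rw [entropy_eq_sum_negMulLog hq]
  refine Tendsto.congr' (hf0.mono fun x hx => (entropy_eq_sum_negMulLog hx).symm) ?_
  exact tendsto_finsetSum _ fun i _ =>
    (Real.continuous_negMulLog.tendsto _).comp ((continuous_apply i).tendsto q |>.comp hf)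

lemma Dkl_eq_top {n : ℕ} {t p : Fin n → ℝ} {j : Fin n} (htj : 0 < t j) (hpj : p j ≤ 0) :
    Dkl t p = ⊤ :=
  if_neg fun h => (h j htj).not_ge hpj

lemma Dkl_uniform {n : ℕ} {t : Fin n → ℝ} (ht : ∀ i, 0 ≤ t i) (hsum : ∑ i, t i = 1) :
    Dkl t (fun _ => 1 / (n : ℝ)) = ((Real.log n - entropy t : ℝ) : EReal) := by
  have hn : (0 : ℝ) < n := Nat.cast_pos.2 <| Nat.pos_of_ne_zero <| by rintro rfl; simp at hsum
  have hterm : ∀ i, (if 0 < t i then t i * Real.log (t i / (1 / n)) else 0)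
      = (if 0 < t i then t i * Real.log (t i) else 0) + t i * Real.log n := by
    intro i
    rcases (ht i).lt_or_eq with hi | hi
    · rw [if_pos hi, if_pos hi, one_div, div_inv_eq_mul, Real.log_mul hi.ne' hn.ne']
      ring
    · simp [← hi]
  rw [Dkl, if_pos fun _ _ => by positivity, sum_congr rfl fun i _ => hterm i, sum_add_distrib,
    ← sum_mul, hsum, entropy]
  congr 1
  ring

lemma Dkl_uniform_le {n : ℕ} {t : Fin n → ℝ} (ht : ∀ i, 0 < t i) {c : Fin n → ℕ}
    (hc : ∑ i, c i = n) :
    Dkl t (fun _ => 1 / (n : ℝ)) ≤ Dkl t (fun i => (c i : ℝ) / n) := by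
  by_cases hc0 : ∀ i, c i ≠ 0
  · have hc1 := Fintype.eq_one_of_sum_eq_card (hc.trans (Fintype.card_fin n).symm) hc0
    simp [hc1]
  · obtain ⟨j, hj⟩ := not_forall_not.1 hc0
    rw [Dkl_eq_top (p := fun i => (c i : ℝ) / n) (ht j) (by simp [hj])]
    exact le_top

theorem uniform_optimal_and_divergence_log_n
    {n : ℕ} (hn : 2 ≤ n)
    (t : ℝ → Fin n → ℝ)
    (ht : ∀ ε : ℝ, ∀ i : Fin n,
      t ε i = if i = ⟨0, by omega⟩ then 1 - ε else ε / ((n : ℝ) - 1)) :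
    (∀ ε : ℝ, 0 < ε → ε < 1 →
      (∀ c : Fin n → ℕ, ∑ i, c i = n →
        Dkl (t ε) (fun _ => 1 / (n : ℝ)) ≤ Dkl (t ε) (fun i => (c i : ℝ) / n)) ∧
      Dkl (t ε) (fun _ => 1 / (n : ℝ)) =
        ((Real.log n - entropy (t ε) : ℝ) : EReal)) ∧
    Tendsto (fun ε => Real.log n - entropy (t ε)) (nhdsWithin 0 (Set.Ioi 0))
      (nhds (Real.log n)) := by
  have hn1 : (0 : ℝ) < n - 1 := by
    have : (2 : ℝ) ≤ n := by exact_mod_cast hn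
    linarith
  have hpos : ∀ ε, 0 < ε → ε < 1 → ∀ i, 0 < t ε i := fun ε h0 h1 i => by
    rw [ht]; split_ifs <;> first | linarith | positivity
  have hnonneg : ∀ ε, 0 ≤ ε → ε ≤ 1 → ∀ i, 0 ≤ t ε i := fun ε h0 h1 i => by
    rw [ht]; split_ifs <;> first | linarith | positivity
  have hsum : ∀ ε, ∑ i, t ε i = 1 := fun ε => by
    simp only [ht, Fintype.sum_ite_eq_add_mul, Fintype.card_fin]
    field_simp
    ring
  refine ⟨fun ε h0 h1 => ⟨fun c hc => Dkl_uniform_le (hpos ε h0 h1) hc,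
    Dkl_uniform (fun i => (hpos ε h0 h1 i).le) (hsum ε)⟩, ?_⟩
  have hcont : Continuous t := by
    rw [show t = _ from funext₂ ht]
    exact continuous_pi fun i => by split_ifs <;> fun_prop
  have hentropy : Tendsto (fun ε => entropy (t ε)) (nhdsWithin 0 (Set.Ioi 0))
      (nhds (entropy (t 0))) := by
    refine tendsto_entropy (hcont.tendsto 0 |>.mono_left nhdsWithin_le_nhds) ?_
      (hnonneg 0 le_rfl zero_le_one)
    filter_upwards [Ioo_mem_nhdsGT (zero_lt_one' ℝ)] with ε hε
    exact hnonneg ε hε.1.le hε.2.le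
  have hpoint : entropy (t 0) = 0 := by
    simp [entropy_eq_sum_negMulLog (hnonneg 0 le_rfl zero_le_one), ht, apply_ite]
  simpa [hpoint] using tendsto_const_nhds.sub hentropy
end

section
/- Let t be a probability distribution on n points and M ≥ n a positive integer such that M·t_i > 1 for all i with t_i > 0. If t^vd is a variational-distance-optimal M-type approximation of t (which then has the same support as t and satisfies Σ_i |t_i - t^vd_i| ≤ n/(2M) and t^vd_i ≥ ⌊M t_i⌋/M), then D(t‖t^vd) ≤ log(1 + n/(2M)). -/
open Finset

/-- Informational divergence D(t‖p) (real-valued, summed over the support of t). -/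
noncomputable def Dr {n : ℕ} (t p : Fin n → ℝ) : ℝ :=
  ∑ i, if 0 < t i then t i * Real.log (t i / p i) else 0

theorem divergence_bound_vd_optimal
    {n M : ℕ} (hn : 0 < n) (hnM : n ≤ M)
    (t : Fin n → ℝ) (ht_nonneg : ∀ i, 0 ≤ t i) (ht_sum : ∑ i, t i = 1)
    (hM : ∀ i, 0 < t i → 1 < (M : ℝ) * t i)
    (c : Fin n → ℕ) (hc : ∑ i, c i = M)
    (tvd : Fin n → ℝ) (htvd : ∀ i, tvd i = (c i : ℝ) / M)
    (hopt : ∀ c' : Fin n → ℕ, ∑ i, c' i = M →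
      ∑ i, |tvd i - t i| ≤ ∑ i, |(c' i : ℝ) / M - t i|)
    (hfloor : ∀ i, (⌊(M : ℝ) * t i⌋ : ℝ) / M ≤ tvd i)
    (hvd : ∑ i, |t i - tvd i| ≤ (n : ℝ) / (2 * M)) :
    Dr t tvd ≤ Real.log (1 + (n : ℝ) / (2 * M)) := by
  classical
  have hM0 : 0 < M := lt_of_lt_of_le hn hnM
  have hMr : (0:ℝ) < M := by exact_mod_cast hM0
  set s : Finset (Fin n) := Finset.univ.filter (fun i => 0 < t i) with hs
  have htvd_nonneg : ∀ i, 0 ≤ tvd i := by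
    intro i; rw [htvd]; positivity
  have hzero : ∀ i ∈ Finset.univ.filter (fun i => ¬ 0 < t i), t i = 0 := by
    intro i hi
    have h := (Finset.mem_filter.mp hi).2
    exact le_antisymm (not_lt.mp h) (ht_nonneg i)
  -- key pointwise facts on the support
  have hkey : ∀ i ∈ s, 0 < tvd i ∧ |t i - tvd i| ≤ tvd i := by
    intro i hi
    have hti : 0 < t i := (Finset.mem_filter.mp hi).2
    have h1 : (1:ℝ) ≤ (⌊(M:ℝ) * t i⌋ : ℝ) := by
      have h := (hM i hti).le
      exact_mod_cast Int.le_floor.mpr (by exact_mod_cast h)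
    have hfl := hfloor i
    have hF : (⌊(M:ℝ) * t i⌋ : ℝ) ≤ tvd i * M := (div_le_iff₀ hMr).mp hfl
    have h2 : (M:ℝ) * t i < (⌊(M:ℝ) * t i⌋ : ℝ) + 1 := Int.lt_floor_add_one _
    have hpos : 0 < tvd i := by nlinarith
    refine ⟨hpos, ?_⟩
    rw [abs_le]
    constructor
    · linarith [hti.le]
    · nlinarith
  -- sums
  have hsum_split := Finset.sum_filter_add_sum_filter_not Finset.univ (fun i => 0 < t i) t
  have hsum_s : ∑ i ∈ s, t i = 1 := by
    rw [Finset.sum_eq_zero hzero] at hsum_split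
    simpa [hs, ht_sum] using hsum_split
  have htvd_total : ∑ i, tvd i = 1 := by
    have hcast : ∑ i, ((c i : ℝ)) = (M : ℝ) := by exact_mod_cast hc
    simp only [htvd]
    rw [← Finset.sum_div, hcast, div_self (ne_of_gt hMr)]
  have htvd_split := Finset.sum_filter_add_sum_filter_not Finset.univ (fun i => 0 < t i) tvd
  have hd_split := Finset.sum_filter_add_sum_filter_not Finset.univ (fun i => 0 < t i)
      (fun i => |t i - tvd i|)
  have hnot_eq : ∑ i ∈ Finset.univ.filter (fun i => ¬ 0 < t i), |t i - tvd i|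
      = ∑ i ∈ Finset.univ.filter (fun i => ¬ 0 < t i), tvd i := by
    apply Finset.sum_congr rfl
    intro i hi
    rw [hzero i hi, zero_sub, abs_neg, abs_of_nonneg (htvd_nonneg i)]
  -- the main bound on ∑ t_i^2 / tvd_i
  have hmain : ∑ i ∈ s, t i * (t i / tvd i) ≤ 1 + (n : ℝ) / (2 * M) := by
    have hpt : ∀ i ∈ s, t i * (t i / tvd i)
        ≤ tvd i + 2 * (t i - tvd i) + |t i - tvd i| := by
      intro i hi
      obtain ⟨hpos, habs⟩ := hkey i hi
      rw [mul_div_assoc', div_le_iff₀ hpos]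
      nlinarith [sq_abs (t i - tvd i), abs_nonneg (t i - tvd i),
        mul_le_mul_of_nonneg_left habs (abs_nonneg (t i - tvd i))]
    have hstep := Finset.sum_le_sum hpt
    have hA : ∑ i ∈ s, (tvd i + 2 * (t i - tvd i) + |t i - tvd i|)
        = (∑ i ∈ s, tvd i) + 2 * ((∑ i ∈ s, t i) - ∑ i ∈ s, tvd i)
          + ∑ i ∈ s, |t i - tvd i| := by
      rw [Finset.sum_add_distrib, Finset.sum_add_distrib, ← Finset.mul_sum,
        Finset.sum_sub_distrib]
    have h1 : (∑ i ∈ s, tvd i)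
        + (∑ i ∈ Finset.univ.filter (fun i => ¬ 0 < t i), tvd i) = 1 := by
      simpa [hs, htvd_total] using htvd_split
    have h2 : (∑ i ∈ s, |t i - tvd i|)
        + (∑ i ∈ Finset.univ.filter (fun i => ¬ 0 < t i), tvd i)
        ≤ (n : ℝ) / (2 * M) := by
      have hvd' := hvd
      rw [← hd_split] at hvd'
      rw [← hnot_eq]
      simpa [hs] using hvd'
    rw [hA, hsum_s] at hstep
    linarith
  -- Jensen's inequality
  have hs_w : ∀ i ∈ s, 0 ≤ t i := fun i hi => (ht_nonneg i)
  have hmem : ∀ i ∈ s, t i / tvd i ∈ Set.Ioi (0:ℝ) := by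
    intro i hi
    have hti : 0 < t i := (Finset.mem_filter.mp hi).2
    exact Set.mem_Ioi.mpr (div_pos hti (hkey i hi).1)
  have hjensen := strictConcaveOn_log_Ioi.concaveOn.le_map_sum hs_w hsum_s hmem
  simp only [smul_eq_mul] at hjensen
  have hDr : Dr t tvd = ∑ i ∈ s, t i * Real.log (t i / tvd i) := by
    rw [Dr, hs, Finset.sum_filter]
  -- positivity of the inner sum
  have hex : ∃ i ∈ s, 0 < t i * (t i / tvd i) := by
    have hne : s.Nonempty := by
      by_contra h
      rw [Finset.not_nonempty_iff_eq_empty] at h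
      rw [h, Finset.sum_empty] at hsum_s
      norm_num at hsum_s
    obtain ⟨i, hi⟩ := hne
    have hti : 0 < t i := (Finset.mem_filter.mp hi).2
    exact ⟨i, hi, mul_pos hti (div_pos hti (hkey i hi).1)⟩
  have hsum_pos : 0 < ∑ i ∈ s, t i * (t i / tvd i) := by
    obtain ⟨i, hi, hpos⟩ := hex
    refine Finset.sum_pos' ?_ ⟨i, hi, hpos⟩
    intro j hj
    exact mul_nonneg (ht_nonneg j) (le_of_lt (Set.mem_Ioi.mp (hmem j hj)))
  calc Dr t tvd = ∑ i ∈ s, t i * Real.log (t i / tvd i) := hDr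
    _ ≤ Real.log (∑ i ∈ s, t i * (t i / tvd i)) := hjensen
    _ ≤ Real.log (1 + (n : ℝ) / (2 * M)) := Real.log_le_log hsum_pos hmain
end

section
/- Let t be a probability distribution on {1,...,n} with all t_i > 0, M ≥ n, and let P_M = {p : p_i ≥ 1/M for all i, Σ p_i = 1}. Then the distribution t* defined by t*_i = t_i/ν + max{0, 1/M - t_i/ν}, where ν > 0 is chosen so that Σ_i t*_i = 1, minimizes D(t‖p) over p ∈ P_M. -/
open Finset

lemma gibbs_aux {n : ℕ} (q p : Fin n → ℝ) (hq : ∀ i, 0 < q i) (hp : ∀ i, 0 < p i)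
    (h : ∑ i, p i = ∑ i, q i) : ∑ i, q i * Real.log (p i / q i) ≤ 0 := by
  have hle : ∑ i, q i * Real.log (p i / q i) ≤ ∑ i, (p i - q i) := by
    apply Finset.sum_le_sum
    intro i _
    have h1 : Real.log (p i / q i) ≤ p i / q i - 1 :=
      Real.log_le_sub_one_of_pos (div_pos (hp i) (hq i))
    have h2 : q i * Real.log (p i / q i) ≤ q i * (p i / q i - 1) :=
      mul_le_mul_of_nonneg_left h1 (hq i).le
    have h3 : q i * (p i / q i - 1) = p i - q i := by
      rw [mul_sub, mul_div_cancel₀ _ (hq i).ne', mul_one]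
    linarith
  have : ∑ i, (p i - q i) = 0 := by
    rw [Finset.sum_sub_distrib, h, sub_self]
  linarith

theorem reverse_I_projection_formula
    {n M : ℕ} (hn : 0 < n) (hnM : n ≤ M)
    (t : Fin n → ℝ) (ht_pos : ∀ i, 0 < t i) (ht_sum : ∑ i, t i = 1)
    (ν : ℝ) (hν : 0 < ν)
    (tstar : Fin n → ℝ)
    (htstar : ∀ i, tstar i = t i / ν + max 0 (1 / (M : ℝ) - t i / ν))
    (hnorm : ∑ i, tstar i = 1) :
    ∀ p : Fin n → ℝ, (∀ i, 1 / (M : ℝ) ≤ p i) → ∑ i, p i = 1 →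
      Dr t tstar ≤ Dr t p := by
  intro p hp hpsum
  have hM0 : 0 < (M : ℝ) := by exact_mod_cast lt_of_lt_of_le hn hnM
  have hM : 0 < 1 / (M : ℝ) := by positivity
  have hts : ∀ i, tstar i = max (t i / ν) (1 / (M : ℝ)) := by
    intro i
    rcases le_total (t i / ν) (1 / (M : ℝ)) with h | h
    · rw [htstar i, max_eq_right h, max_eq_right (by linarith)]; ring
    · rw [htstar i, max_eq_left h, max_eq_left (by linarith)]; ring
  have htspos : ∀ i, 0 < tstar i := fun i => by
    rw [hts i]; exact lt_of_lt_of_le hM (le_max_right _ _)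
  have hppos : ∀ i, 0 < p i := fun i => lt_of_lt_of_le hM (hp i)
  have hD : ∀ q : Fin n → ℝ, Dr t q = ∑ i, t i * Real.log (t i / q i) := by
    intro q
    unfold Dr
    exact Finset.sum_congr rfl fun i _ => if_pos (ht_pos i)
  rw [hD, hD]
  suffices hkey : 0 ≤ ∑ i, t i * Real.log (tstar i / p i) by
    have hsplit : ∑ i, t i * Real.log (t i / p i)
        = ∑ i, t i * Real.log (t i / tstar i) + ∑ i, t i * Real.log (tstar i / p i) := by
      rw [← Finset.sum_add_distrib]
      apply Finset.sum_congr rfl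
      intro i _
      rw [Real.log_div (ht_pos i).ne' (hppos i).ne',
          Real.log_div (ht_pos i).ne' (htspos i).ne',
          Real.log_div (htspos i).ne' (hppos i).ne']
      ring
    linarith
  -- key inequality
  have term : ∀ i, ν * (tstar i * Real.log (tstar i / p i)) ≤ t i * Real.log (tstar i / p i) := by
    intro i
    rcases le_total (1 / (M : ℝ)) (t i / ν) with hc | hc
    · have hts_i : tstar i = t i / ν := by rw [hts i]; exact max_eq_left hc
      rw [hts_i]
      have : ν * (t i / ν * Real.log (t i / ν / p i)) = t i * Real.log (t i / ν / p i) := by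
        field_simp
      linarith
    · have hts_i : tstar i = 1 / (M : ℝ) := by rw [hts i]; exact max_eq_right hc
      have hlog : Real.log (tstar i / p i) ≤ 0 := by
        apply Real.log_nonpos (div_nonneg (htspos i).le (hppos i).le)
        rw [div_le_one (hppos i)]
        rw [hts_i]; exact hp i
      have ht_le : t i ≤ ν * tstar i := by
        rw [hts_i]
        have := (div_le_iff₀ hν).mp hc
        linarith
      nlinarith [mul_nonpos_of_nonneg_of_nonpos (sub_nonneg.2 ht_le) hlog]
  have hgibbs : ∑ i, tstar i * Real.log (p i / tstar i) ≤ 0 :=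
    gibbs_aux tstar p htspos hppos (by rw [hpsum, hnorm])
  have hflip : ∑ i, tstar i * Real.log (tstar i / p i)
      = - ∑ i, tstar i * Real.log (p i / tstar i) := by
    rw [← Finset.sum_neg_distrib]
    apply Finset.sum_congr rfl
    intro i _
    have h : Real.log (tstar i / p i) = -Real.log (p i / tstar i) := by
      rw [← Real.log_inv, inv_div]
    rw [h]; ring
  calc (0 : ℝ) ≤ ν * ∑ i, tstar i * Real.log (tstar i / p i) := by
        apply mul_nonneg hν.le
        rw [hflip]; linarith
    _ = ∑ i, ν * (tstar i * Real.log (tstar i / p i)) := by rw [Finset.mul_sum]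
    _ ≤ ∑ i, t i * Real.log (tstar i / p i) := Finset.sum_le_sum fun i _ => term i
end

section
/- Let p* be a sub-probability distribution with m ≤ M nonzero masses and total weight 1 - T, and let q be an M-type sub-probability vector with total weight J/M (J ≤ M an integer) minimizing ‖p* - q‖_1 subject to q_i ≥ ⌊M p*_i⌋/M. Then ‖p* - q‖_1 ≤ m/(2M) + (M - MT - J)²/(2mM). -/
open Finset

lemma exists_subset_avg {ι : Type*} [DecidableEq ι] (f : ι → ℝ) :
    ∀ (s : Finset ι) (t : ℕ), t ≤ s.card →
      ∃ A ⊆ s, A.card = t ∧ (t : ℝ) * ∑ i ∈ s, f i ≤ (s.card : ℝ) * ∑ i ∈ A, f i := by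
  intro s
  induction s using Finset.strongInduction with
  | _ s ih =>
    intro t ht
    rcases eq_or_lt_of_le ht with h | h
    · exact ⟨s, Finset.Subset.refl s, h.symm, by rw [h]⟩
    · have hne : s.Nonempty := Finset.card_pos.mp (Nat.lt_of_le_of_lt (Nat.zero_le t) h)
      obtain ⟨a, ha, hmin⟩ := s.exists_min_image f hne
      have hcard : (s.erase a).card = s.card - 1 := Finset.card_erase_of_mem ha
      have ht' : t ≤ (s.erase a).card := by omega
      obtain ⟨A, hAs, hAcard, hA⟩ := ih (s.erase a) (Finset.erase_ssubset ha) t ht'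
      refine ⟨A, hAs.trans (Finset.erase_subset _ _), hAcard, ?_⟩
      have hfa : (t : ℝ) * f a ≤ ∑ i ∈ A, f i := by
        calc (t:ℝ) * f a = ∑ _i ∈ A, f a := by rw [Finset.sum_const, hAcard, nsmul_eq_mul]
        _ ≤ ∑ i ∈ A, f i := Finset.sum_le_sum fun i hi => hmin i (Finset.mem_of_mem_erase (hAs hi))
      have hsum : ∑ i ∈ s, f i = ∑ i ∈ s.erase a, f i + f a := (Finset.sum_erase_add s f ha).symm
      have hcast : ((s.erase a).card : ℝ) = (s.card : ℝ) - 1 := by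
        rw [hcard]; push_cast [Nat.cast_sub (by omega : 1 ≤ s.card)]; ring
      rw [hcast] at hA
      rw [hsum]
      nlinarith [hA, hfa]

set_option maxHeartbeats 1000000

theorem vd_bound_subprobability
    {n M J : ℕ} (hM : 0 < M) (hJ : J ≤ M)
    (pstar : Fin n → ℝ) (hp_nonneg : ∀ i, 0 ≤ pstar i)
    (T : ℝ) (hT : ∑ i, pstar i = 1 - T) (hT_nonneg : 0 ≤ T)
    (m : ℕ) (hm : m = (Finset.univ.filter (fun i => 0 < pstar i)).card)
    (hm_pos : 0 < m) (hmM : m ≤ M)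
    (c : Fin n → ℕ) (hcsum : ∑ i, c i = J)
    (q : Fin n → ℝ) (hq : ∀ i, q i = (c i : ℝ) / M)
    (hq_floor : ∀ i, (⌊(M : ℝ) * pstar i⌋ : ℝ) / M ≤ q i)
    (hq_opt : ∀ c' : Fin n → ℕ, ∑ i, c' i = J →
      (∀ i, (⌊(M : ℝ) * pstar i⌋ : ℝ) / M ≤ (c' i : ℝ) / M) →
      ∑ i, |pstar i - q i| ≤ ∑ i, |pstar i - (c' i : ℝ) / M|) :
    ∑ i, |pstar i - q i| ≤
      (m : ℝ) / (2 * M) + ((M : ℝ) - M * T - J) ^ 2 / (2 * m * M) := by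
  have hMR : (0:ℝ) < M := by exact_mod_cast hM
  have hmR : (0:ℝ) < m := by exact_mod_cast hm_pos
  set P := Finset.univ.filter (fun i => 0 < pstar i) with hP
  have hPcard : P.card = m := hm.symm
  have hPne : P.Nonempty := Finset.card_pos.mp (by omega)
  obtain ⟨j0, hj0⟩ := hPne
  have hMp_nn : ∀ i, (0:ℝ) ≤ (M:ℝ) * pstar i := fun i => mul_nonneg hMR.le (hp_nonneg i)
  have hfloor_nn : ∀ i, 0 ≤ ⌊(M:ℝ) * pstar i⌋ := fun i => Int.floor_nonneg.mpr (hMp_nn i)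
  set fl : Fin n → ℕ := fun i => (⌊(M:ℝ) * pstar i⌋).toNat with hfl
  have hflc : ∀ i, (fl i : ℝ) = (⌊(M:ℝ) * pstar i⌋ : ℝ) := fun i => by
    simp only [hfl]
    exact_mod_cast congrArg (fun z : ℤ => (z:ℝ)) (Int.toNat_of_nonneg (hfloor_nn i))
  set e : Fin n → ℝ := fun i => (M:ℝ) * pstar i - fl i with he
  have he_nn : ∀ i, 0 ≤ e i := fun i => by
    simp only [he, hflc]; linarith [Int.floor_le ((M:ℝ)*pstar i)]
  have he_lt : ∀ i, e i < 1 := fun i => by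
    simp only [he, hflc]; linarith [Int.lt_floor_add_one ((M:ℝ)*pstar i)]
  have he_zero : ∀ i, i ∉ P → e i = 0 := by
    intro i hi
    have hpi : pstar i = 0 := by
      by_contra hne
      exact hi (Finset.mem_filter.mpr ⟨Finset.mem_univ i, lt_of_le_of_ne (hp_nonneg i) (Ne.symm hne)⟩)
    simp only [he, hflc, hpi, mul_zero, Int.floor_zero, Int.cast_zero, sub_zero]
  set F := ∑ i, fl i with hF
  have hflc' : ∀ i, fl i ≤ c i := by
    intro i
    have h1 : (⌊(M:ℝ)*pstar i⌋ : ℝ) ≤ (c i : ℝ) := by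
      have := hq_floor i
      rw [hq i] at this
      exact (div_le_div_iff_of_pos_right hMR).mp this
    have h2 : (fl i : ℝ) ≤ (c i : ℝ) := by rw [hflc]; exact h1
    exact_mod_cast h2
  have hFJ : F ≤ J := by
    rw [hF, ← hcsum]
    exact Finset.sum_le_sum fun i _ => hflc' i
  set L := J - F with hL
  set t := min L m with ht
  have htm : t ≤ m := min_le_right _ _
  have htL : t ≤ L := min_le_left _ _
  obtain ⟨A, hAP, hAcard, hAsum⟩ := exists_subset_avg e P t (by omega)
  have hkey : j0 ∈ A ∨ L = t := by
    by_cases h : L ≤ m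
    · right; rw [ht, min_eq_left h]
    · left
      have hAeq : A = P := Finset.eq_of_subset_of_card_le hAP (by omega)
      exact hAeq ▸ hj0
  set c' : Fin n → ℕ := fun i => fl i + (if i ∈ A then 1 else 0) + (if i = j0 then L - t else 0)
    with hc'
  have hc'sum : ∑ i, c' i = J := by
    simp only [hc']
    rw [Finset.sum_add_distrib, Finset.sum_add_distrib]
    rw [Finset.sum_ite_eq' Finset.univ j0 (fun _ => L - t)]
    rw [Finset.sum_ite_mem, Finset.univ_inter, Finset.sum_const]
    simp only [Finset.mem_univ, if_true, smul_eq_mul, mul_one, hAcard]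
    omega
  have hfeas : ∀ i, (⌊(M:ℝ)*pstar i⌋ : ℝ)/M ≤ (c' i : ℝ)/M := by
    intro i
    have h1 : fl i ≤ c' i := by simp only [hc']; omega
    have h2 : (⌊(M:ℝ)*pstar i⌋ : ℝ) ≤ (c' i : ℝ) := by
      rw [← hflc]; exact_mod_cast h1
    exact div_le_div_of_nonneg_right h2 hMR.le
  refine (hq_opt c' hc'sum hfeas).trans ?_
  set S := ∑ i, e i with hS
  set E := ∑ i ∈ A, e i with hE
  have hSP : ∑ i ∈ P, e i = S := Finset.sum_subset (Finset.subset_univ P) (fun i _ hi => he_zero i hi)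
  rw [hSP, hPcard] at hAsum
  have hr_nn : (0:ℝ) ≤ ((L - t : ℕ) : ℝ) := Nat.cast_nonneg _
  have hpt : ∀ i, |pstar i - (c' i : ℝ)/M| =
      ((if i ∈ A then 1 - e i else e i) + (if i = j0 then ((L - t : ℕ) : ℝ) else 0)) / M := by
    intro i
    have hcast : (c' i : ℝ) = (fl i : ℝ) + (if i ∈ A then (1:ℝ) else 0)
        + (if i = j0 then ((L - t : ℕ) : ℝ) else 0) := by
      simp only [hc']
      push_cast [apply_ite (fun k : ℕ => (k : ℝ))]
      ring
    have hnum : pstar i - (c' i : ℝ)/M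
        = (e i - ((if i ∈ A then (1:ℝ) else 0) + (if i = j0 then ((L - t : ℕ) : ℝ) else 0)))/M := by
      rw [hcast]
      simp only [he]
      field_simp
      ring
    rw [hnum, abs_div, abs_of_pos hMR]
    congr 1
    by_cases hiA : i ∈ A <;> by_cases hij : i = j0
    · simp only [if_pos hiA, if_pos hij]
      rw [abs_of_nonpos (by linarith [he_lt i, hr_nn])]; ring
    · simp only [if_pos hiA, if_neg hij]
      rw [abs_of_nonpos (by linarith [he_lt i])]; ring
    · have hLt : L = t := by
        rcases hkey with h | h
        · exact absurd (by rwa [hij] : i ∈ A) hiA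
        · exact h
      have hz : ((L - t : ℕ) : ℝ) = 0 := by rw [hLt]; simp
      simp only [if_neg hiA, if_pos hij, hz, add_zero, zero_add, sub_zero]
      exact abs_of_nonneg (he_nn i)
    · simp only [if_neg hiA, if_neg hij, add_zero, zero_add, sub_zero]
      exact abs_of_nonneg (he_nn i)
  have hLtc : ((L - t : ℕ) : ℝ) = (L:ℝ) - (t:ℝ) := by
    push_cast [Nat.cast_sub htL]; ring
  have hsum_eq : ∑ i, |pstar i - (c' i : ℝ)/M| = (S + (L:ℝ) - 2*E) / M := by
    rw [Finset.sum_congr rfl (fun i _ => hpt i), ← Finset.sum_div]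
    congr 1
    rw [Finset.sum_add_distrib]
    have hj : ∑ i, (if i = j0 then ((L - t : ℕ):ℝ) else 0) = ((L - t : ℕ):ℝ) := by
      rw [Finset.sum_ite_eq' Finset.univ j0 (fun _ => ((L - t : ℕ):ℝ))]
      simp
    have h1 : ∀ i : Fin n, (if i ∈ A then 1 - e i else e i) = e i + (if i ∈ A then 1 - 2*e i else 0) := by
      intro i; split_ifs <;> ring
    have h3 : ∑ i ∈ A, (1 - 2*e i) = (t:ℝ) - 2*E := by
      rw [Finset.sum_sub_distrib, Finset.sum_const, hAcard, ← Finset.mul_sum, ← hE]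
      simp only [nsmul_eq_mul, mul_one]
    have h2 : ∑ i, (if i ∈ A then 1 - e i else e i) = S + (t:ℝ) - 2*E := by
      rw [Finset.sum_congr rfl (fun i _ => h1 i), Finset.sum_add_distrib,
        Finset.sum_ite_mem, Finset.univ_inter, h3, ← hS]
      ring
    rw [hj, h2, hLtc]
    ring
  rw [hsum_eq]
  have hid : (M:ℝ) - M*T - J = S - L := by
    have h1 : (M:ℝ)*(1 - T) = S + F := by
      rw [← hT, Finset.mul_sum]
      rw [hS, hF]
      push_cast
      rw [← Finset.sum_add_distrib]
      refine Finset.sum_congr rfl fun i _ => ?_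
      simp only [he]; ring
    have h2 : (J:ℝ) = (F:ℝ) + (L:ℝ) := by
      rw [hL]; push_cast [Nat.cast_sub hFJ]; ring
    linarith
  rw [hid]
  have hmain : S + (L:ℝ) - 2*E ≤ (m:ℝ)/2 + (S - L)^2/(2*m) := by
    have hrw : (m:ℝ)/2 + (S - L)^2/(2*m) = ((m:ℝ)*m + (S-L)^2)/(2*m) := by
      field_simp
    rw [hrw, le_div_iff₀ (by positivity)]
    by_cases hLm : L ≤ m
    · have htc : (t:ℝ) = (L:ℝ) := by rw [ht, min_eq_left hLm]
      rw [htc] at hAsum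
      nlinarith [sq_nonneg ((m:ℝ) - S - (L:ℝ)), hAsum]
    · have htc : (t:ℝ) = (m:ℝ) := by rw [ht, min_eq_right (by omega)]
      rw [htc] at hAsum
      have hSE : S ≤ E := le_of_mul_le_mul_left hAsum hmR
      nlinarith [sq_nonneg ((m:ℝ) - (L:ℝ) + S), mul_nonneg hmR.le (sub_nonneg.mpr hSE)]
  calc (S + (L:ℝ) - 2*E)/M ≤ ((m:ℝ)/2 + (S - L)^2/(2*m))/M :=
        div_le_div_of_nonneg_right hmain hMR.le
    _ = (m : ℝ) / (2 * M) + (S - L) ^ 2 / (2 * m * M) := by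
        rw [add_div, div_div, div_div]
end

section
/- Let t be a probability distribution on n points with all t_i > 0 and let M ≥ n. Let t^a be an M-type distribution minimizing D(t‖p) over all M-type distributions p, and let ν = ν(M) ≥ 1 be the normalization constant of the reverse I-projection of t onto P_M. Then D(t‖t^a) ≤ log ν + (log 2)/2 · (1 - ν(1 - n/M)). -/
/-!
Instead of the Pythagorean identity and reverse Pinsker, bound `D(t‖t^a)` by `D(t‖c/M)` for an
explicit `M`-type `c` obtained by rounding `M t* = max (M t / ν) 1`. With `xᵢ = M tᵢ / ν` one has
`D(t‖c/M) = log ν + ∑ tᵢ log (xᵢ / cᵢ)`. A clipped index (`xᵢ < 1`) gets `cᵢ = 1` and a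
nonpositive term. The unclipped `xᵢ ≥ 1` sum to the integer `M - k`, `k` the number of clipped
indices, and are rounded to `⌊xᵢ⌋` or `⌊xᵢ⌋ + 1` with that total; the best vertex of the
hypersimplex does at least as well as randomised rounding (up with probability `xᵢ - ⌊xᵢ⌋`), for
which `E[xᵢ log (xᵢ / cᵢ)] ≤ 1 / 4`. Hence `D ≤ log ν + (ν / M) (n - k) / 4`, and `k ≥ M - M / ν`
gives `(ν / M) (n - k) ≤ 1 - ν (1 - n / M)`; finally `1 / 4 ≤ log 2 / 2`.
-/

open Finset

open Real

theorem Finset.exists_subset_card_eq_forall_le {ι α : Type*} [DecidableEq ι] [LinearOrder α]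
    (s : Finset ι) (d : ι → α) {u : ℕ} (hu : u ≤ #s) :
    ∃ U ⊆ s, #U = u ∧ ∀ i ∈ U, ∀ j ∈ s \ U, d j ≤ d i := by
  induction u with
  | zero => exact ⟨∅, empty_subset s, card_empty, by simp⟩
  | succ u ih =>
    obtain ⟨U, hUs, hUcard, hUtop⟩ := ih (Nat.le_of_succ_le hu)
    have hne : (s \ U).Nonempty := by
      rw [← card_pos, card_sdiff_of_subset hUs]
      omega
    obtain ⟨i₀, hi₀, hi₀max⟩ := exists_max_image (s \ U) d hne
    obtain ⟨hi₀s, hi₀U⟩ := mem_sdiff.mp hi₀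
    refine ⟨insert i₀ U, insert_subset hi₀s hUs, by rw [card_insert_of_notMem hi₀U, hUcard], ?_⟩
    intro i hi j hj
    obtain ⟨hjs, hjU⟩ := mem_sdiff.mp hj
    have hj' : j ∈ s \ U := mem_sdiff.mpr ⟨hjs, fun h => hjU (mem_insert_of_mem h)⟩
    rcases mem_insert.mp hi with rfl | hiU
    · exact hi₀max j hj'
    · exact hUtop i hiU j hj'

theorem Finset.exists_subset_card_eq_sum_mul_le {ι : Type*} [DecidableEq ι] (s : Finset ι)
    (f d : ι → ℝ) (hf₀ : ∀ i ∈ s, 0 ≤ f i) (hf₁ : ∀ i ∈ s, f i ≤ 1) {u : ℕ}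
    (hfu : ∑ i ∈ s, f i = u) :
    ∃ U ⊆ s, #U = u ∧ ∑ i ∈ s, f i * d i ≤ ∑ i ∈ U, d i := by
  have hus : u ≤ #s := by
    have : (u : ℝ) ≤ #s := by
      rw [← hfu, card_eq_sum_ones, Nat.cast_sum, Nat.cast_one]
      exact sum_le_sum hf₁
    exact_mod_cast this
  obtain ⟨U, hUs, hUcard, hUtop⟩ := s.exists_subset_card_eq_forall_le d hus
  refine ⟨U, hUs, hUcard, ?_⟩
  rcases U.eq_empty_or_nonempty with rfl | hU
  · have hf : ∀ i ∈ s, f i = 0 := by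
      rw [← sum_eq_zero_iff_of_nonneg hf₀, hfu, ← hUcard, card_empty, Nat.cast_zero]
    rw [sum_empty, sum_eq_zero fun i hi => by rw [hf i hi, zero_mul]]
  obtain ⟨i₀, hi₀, hi₀min⟩ := exists_min_image U d hU
  have hmass : ∑ j ∈ s \ U, f j = ∑ i ∈ U, (1 - f i) := by
    rw [sum_sub_distrib, sum_const, hUcard, nsmul_one, ← hfu, ← sum_sdiff hUs]
    ring
  calc ∑ i ∈ s, f i * d i = ∑ j ∈ s \ U, f j * d j + ∑ i ∈ U, f i * d i := (sum_sdiff hUs).symm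
    _ ≤ ∑ j ∈ s \ U, f j * d i₀ + ∑ i ∈ U, f i * d i := by
        gcongr with j hj
        · exact hf₀ j (mem_sdiff.mp hj).1
        · exact hUtop i₀ hi₀ j hj
    _ = ∑ i ∈ U, (1 - f i) * d i₀ + ∑ i ∈ U, f i * d i := by rw [← sum_mul, hmass, sum_mul]
    _ ≤ ∑ i ∈ U, (1 - f i) * d i + ∑ i ∈ U, f i * d i := by
        gcongr with i hi
        · linarith [hf₁ i (hUs hi)]
        · exact hi₀min i hi
    _ = ∑ i ∈ U, d i := by rw [← sum_add_distrib]; exact sum_congr rfl fun i _ => by ring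

theorem mul_log_div_sub_le_one_div_four {m x : ℝ} (hm : 1 ≤ m) (hmx : m ≤ x) (hxm : x ≤ m + 1) :
    x * log (x / m) - (x - m) * (x * log ((m + 1) / m)) ≤ 1 / 4 := by
  have hm0 : 0 < m := by linarith
  have hx0 : 0 < x := by linarith
  have hlog_m : log (x / m) ≤ (x - m) / m := by
    have := log_le_sub_one_of_pos (div_pos hx0 hm0)
    rwa [div_sub_one hm0.ne'] at this
  have hlog_m1 : log (x / (m + 1)) ≤ (x - (m + 1)) / (m + 1) := by
    have := log_le_sub_one_of_pos (div_pos hx0 (by linarith : 0 < m + 1))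
    rwa [div_sub_one (by linarith : m + 1 ≠ 0)] at this
  have hsplit : x * log (x / m) - (x - m) * (x * log ((m + 1) / m))
      = x * ((m + 1 - x) * log (x / m) + (x - m) * log (x / (m + 1))) := by
    rw [log_div hx0.ne' hm0.ne', log_div hx0.ne' (by linarith), log_div (by linarith) hm0.ne']
    ring
  have hcomb : (m + 1 - x) * log (x / m) + (x - m) * log (x / (m + 1))
      ≤ (x - m) * (m + 1 - x) / (m * (m + 1)) := by
    have h := add_le_add (mul_le_mul_of_nonneg_left hlog_m (by linarith : 0 ≤ m + 1 - x))
      (mul_le_mul_of_nonneg_left hlog_m1 (by linarith : 0 ≤ x - m))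
    refine h.trans (le_of_eq ?_)
    field_simp
    ring
  have hprod : 0 ≤ (x - m) * (m + 1 - x) := mul_nonneg (by linarith) (by linarith)
  calc x * log (x / m) - (x - m) * (x * log ((m + 1) / m))
      ≤ (m + 1) * ((x - m) * (m + 1 - x) / (m * (m + 1))) := by
        rw [hsplit]
        exact (mul_le_mul_of_nonneg_left hcomb hx0.le).trans
          (mul_le_mul_of_nonneg_right hxm (by positivity))
    _ = (x - m) * (m + 1 - x) / m := by field_simp
    _ ≤ 1 / 4 := by
        rw [div_le_iff₀ hm0]
        nlinarith [sq_nonneg (2 * x - 2 * m - 1)]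

theorem exists_nat_round_sum_mul_log_le {ι : Type*} [DecidableEq ι] (s : Finset ι) (x : ι → ℝ)
    (hx : ∀ i ∈ s, 1 ≤ x i) {K : ℕ} (hK : ∑ i ∈ s, x i = K) :
    ∃ c : ι → ℕ, (∀ i ∈ s, 1 ≤ c i) ∧ ∑ i ∈ s, c i = K ∧
      ∑ i ∈ s, x i * log (x i / c i) ≤ #s / 4 := by
  set m : ι → ℕ := fun i => ⌊x i⌋₊
  have hm₁ : ∀ i ∈ s, 1 ≤ m i := fun i hi => Nat.le_floor (by exact_mod_cast hx i hi)
  have hm_le : ∀ i ∈ s, (m i : ℝ) ≤ x i := fun i hi => Nat.floor_le (by linarith [hx i hi])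
  have hlt_m : ∀ i, x i < m i + 1 := fun i => Nat.lt_floor_add_one (x i)
  have hmK : ∑ i ∈ s, m i ≤ K := by
    have : ((∑ i ∈ s, m i : ℕ) : ℝ) ≤ K := by
      rw [← hK, Nat.cast_sum]
      exact sum_le_sum hm_le
    exact_mod_cast this
  -- `d i` is what `x i * log (x i / c)` loses when `c` is raised from `m i` to `m i + 1`
  let d : ι → ℝ := fun i => x i * log ((m i + 1) / m i)
  have hfrac : ∑ i ∈ s, (x i - m i) = ((K - ∑ i ∈ s, m i : ℕ) : ℝ) := by
    rw [Nat.cast_sub hmK, sum_sub_distrib, hK, Nat.cast_sum]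
  obtain ⟨U, hUs, hUcard, hU⟩ := s.exists_subset_card_eq_sum_mul_le (fun i => x i - m i) d
    (fun i hi => by linarith [hm_le i hi]) (fun i _ => by linarith [hlt_m i]) hfrac
  refine ⟨fun i => m i + if i ∈ U then 1 else 0, fun i hi => (hm₁ i hi).trans le_self_add, ?_, ?_⟩
  · rw [sum_add_distrib, sum_boole, filter_mem_eq_inter, inter_eq_right.mpr hUs, hUcard,
      Nat.cast_id]
    omega
  · have hterm : ∀ i ∈ s, x i * log (x i / ((m i + if i ∈ U then 1 else 0 : ℕ) : ℝ))
        = x i * log (x i / m i) - if i ∈ U then d i else 0 := by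
      intro i hi
      have hm₀ : (0 : ℝ) < m i := by exact_mod_cast hm₁ i hi
      have hx₀ : 0 < x i := by linarith [hm_le i hi]
      split_ifs
      · have hm₁₀ : (m i : ℝ) + 1 ≠ 0 := by positivity
        push_cast [d]
        rw [log_div hx₀.ne' hm₁₀, log_div hx₀.ne' hm₀.ne', log_div hm₁₀ hm₀.ne']
        ring
      · simp
    calc ∑ i ∈ s, x i * log (x i / ((m i + if i ∈ U then 1 else 0 : ℕ) : ℝ))
        = ∑ i ∈ s, x i * log (x i / m i) - ∑ i ∈ U, d i := by
          rw [sum_congr rfl hterm, sum_sub_distrib, sum_ite_mem, inter_eq_right.mpr hUs]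
      _ ≤ ∑ i ∈ s, (x i * log (x i / m i) - (x i - m i) * d i) := by
          rw [sum_sub_distrib]
          linarith
      _ ≤ ∑ _i ∈ s, (1 / 4 : ℝ) := sum_le_sum fun i hi =>
          mul_log_div_sub_le_one_div_four (by exact_mod_cast hm₁ i hi) (hm_le i hi) (hlt_m i).le
      _ = #s / 4 := by rw [sum_const, nsmul_eq_mul]; ring

theorem mul_log_div_div_eq {a c ν M : ℝ} (ha : 0 < a) (hc : 0 < c) (hν : 0 < ν) (hM : 0 < M) :
    a * log (a / (c / M)) = a * log ν + ν / M * (M * (a / ν) * log (M * (a / ν) / c)) := by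
  rw [show a / (c / M) = ν * (M * (a / ν) / c) by field_simp,
    log_mul hν.ne' (div_pos (mul_pos hM (div_pos ha hν)) hc).ne']
  field_simp

/-- The indices at which the reverse I-projection `t*ᵢ = max (tᵢ / ν) (1 / M)` of `t` onto `P_M`
is not clipped to `1 / M`. -/
noncomputable def unclipped {ι : Type*} [Fintype ι] (t : ι → ℝ) (ν : ℝ) (M : ℕ) : Finset ι :=
  univ.filter fun i => 1 / (M : ℝ) ≤ t i / ν

section Clipping

variable {ι : Type*} [Fintype ι] {t : ι → ℝ} {ν : ℝ} {M : ℕ}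

theorem mem_unclipped {i : ι} : i ∈ unclipped t ν M ↔ 1 / (M : ℝ) ≤ t i / ν := by
  simp [unclipped]

variable [DecidableEq ι]

theorem mem_compl_unclipped {i : ι} : i ∈ (unclipped t ν M)ᶜ ↔ t i / ν < 1 / M := by
  rw [mem_compl, mem_unclipped, not_le]

theorem sum_unclipped_add_card_compl (hnorm : ∑ i, max (t i / ν) (1 / (M : ℝ)) = 1) :
    ∑ i ∈ unclipped t ν M, t i / ν + #(unclipped t ν M)ᶜ / (M : ℝ) = 1 := by
  rw [← hnorm, ← sum_add_sum_compl (unclipped t ν M), div_eq_mul_one_div, ← nsmul_eq_mul,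
    ← sum_const]
  congr 1 <;> refine sum_congr rfl fun i hi => ?_
  · exact (max_eq_left (mem_unclipped.mp hi)).symm
  · exact (max_eq_right (mem_compl_unclipped.mp hi).le).symm

theorem card_compl_unclipped_le_and_sum_mul_eq (hM : 0 < M)
    (hnorm : ∑ i, max (t i / ν) (1 / (M : ℝ)) = 1) :
    #(unclipped t ν M)ᶜ ≤ M ∧
      ∑ i ∈ unclipped t ν M, M * (t i / ν) = ((M - #(unclipped t ν M)ᶜ : ℕ) : ℝ) := by
  have hsplit := sum_unclipped_add_card_compl hnorm
  have hM' : (0 : ℝ) < M := by exact_mod_cast hM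
  have hkM : #(unclipped t ν M)ᶜ ≤ M := by
    have hmass : 0 ≤ ∑ i ∈ unclipped t ν M, t i / ν :=
      sum_nonneg fun i hi => (by positivity : (0 : ℝ) ≤ 1 / M).trans (mem_unclipped.mp hi)
    have : (#(unclipped t ν M)ᶜ : ℝ) / M ≤ 1 := by linarith
    exact_mod_cast (div_le_one hM').mp this
  refine ⟨hkM, ?_⟩
  rw [← mul_sum, Nat.cast_sub hkM, eq_sub_of_add_eq hsplit]
  field_simp

theorem sub_div_le_card_compl_unclipped (hν : 0 < ν) (ht : ∀ i, 0 ≤ t i) (ht_sum : ∑ i, t i = 1)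
    (hnorm : ∑ i, max (t i / ν) (1 / (M : ℝ)) = 1) :
    M - M / ν ≤ #(unclipped t ν M)ᶜ := by
  have hmass : ∑ i ∈ unclipped t ν M, t i ≤ 1 :=
    ht_sum ▸ sum_le_sum_of_subset_of_nonneg (subset_univ _) fun i _ _ => ht i
  have hsplit := sum_unclipped_add_card_compl hnorm
  rcases M.eq_zero_or_pos with rfl | hM
  · simp
  have hM' : (0 : ℝ) < M := by exact_mod_cast hM
  rw [← sum_div, div_add_div _ _ hν.ne' hM'.ne', div_eq_one_iff_eq (by positivity)] at hsplit
  rw [sub_le_comm, le_div_iff₀ hν]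
  nlinarith

theorem exists_mType_sum_mul_log_le (hM : 0 < M) (ht : ∀ i, 0 < t i) (hν : 0 < ν)
    (hnorm : ∑ i, max (t i / ν) (1 / (M : ℝ)) = 1) :
    ∃ c : ι → ℕ, ∑ i, c i = M ∧ (∀ i, 1 ≤ c i) ∧
      ∑ i, t i * log (t i / (c i / M)) ≤ (∑ i, t i) * log ν + ν / M * #(unclipped t ν M) / 4 := by
  obtain ⟨hkM, hxB⟩ := card_compl_unclipped_le_and_sum_mul_eq hM hnorm
  set B := unclipped t ν M
  have hM' : (0 : ℝ) < M := by exact_mod_cast hM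
  have hx : ∀ i ∈ B, 1 ≤ M * (t i / ν) := fun i hi => by
    have := mem_unclipped.mp hi
    rwa [div_le_iff₀' hM'] at this
  obtain ⟨c, hc₁, hcsum, hclog⟩ := exists_nat_round_sum_mul_log_le B _ hx hxB
  refine ⟨fun i => if i ∈ B then c i else 1, ?_, fun i => ?_, ?_⟩
  · rw [← sum_add_sum_compl B, sum_congr rfl fun i hi => if_pos hi,
      sum_congr rfl fun i hi => if_neg (mem_compl.mp hi), hcsum, sum_const, smul_eq_mul, mul_one]
    omega
  · dsimp only
    split_ifs with hi
    exacts [hc₁ i hi, le_rfl]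
  have hout : ∀ i ∈ Bᶜ, t i * log (t i / ((1 : ℕ) / (M : ℝ))) ≤ t i * log ν := fun i hi => by
    have hlt := mem_compl_unclipped.mp hi
    rw [div_lt_div_iff₀ hν hM', one_mul] at hlt
    rw [Nat.cast_one, div_div_eq_mul_div, div_one]
    exact mul_le_mul_of_nonneg_left (log_le_log (mul_pos (ht i) hM') hlt.le) (ht i).le
  calc ∑ i, t i * log (t i / ((if i ∈ B then c i else 1 : ℕ) / (M : ℝ)))
      = ∑ i ∈ B, t i * log (t i / ((c i : ℝ) / M))
        + ∑ i ∈ Bᶜ, t i * log (t i / ((1 : ℕ) / (M : ℝ))) := by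
        rw [← sum_add_sum_compl B]
        congr 1 <;> refine sum_congr rfl fun i hi => ?_
        · rw [if_pos hi]
        · rw [if_neg (mem_compl.mp hi)]
    _ ≤ ∑ i ∈ B, (t i * log ν + ν / M * (M * (t i / ν) * log (M * (t i / ν) / c i)))
        + ∑ i ∈ Bᶜ, t i * log ν := by
        refine add_le_add (sum_congr rfl fun i hi => ?_).le (sum_le_sum hout)
        exact mul_log_div_div_eq (ht i) (by exact_mod_cast hc₁ i hi) hν hM'
    _ = (∑ i, t i) * log ν + ν / M * ∑ i ∈ B, M * (t i / ν) * log (M * (t i / ν) / c i) := by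
        rw [sum_add_distrib, ← mul_sum, add_right_comm, ← sum_add_sum_compl B t, add_mul,
          sum_mul, sum_mul]
    _ ≤ (∑ i, t i) * log ν + ν / M * #B / 4 := by
        rw [mul_div_assoc]
        gcongr

end Clipping

theorem Dkl_eq_sum_of_pos {n : ℕ} {t p : Fin n → ℝ} (ht : ∀ i, 0 < t i) (hp : ∀ i, 0 < p i) :
    Dkl t p = ((∑ i, t i * log (t i / p i) : ℝ) : EReal) := by
  rw [Dkl, if_pos fun i _ => hp i]
  simp only [if_pos (ht _)]

theorem approximation_bound_general
    {n M : ℕ} (hn : 0 < n) (hnM : n ≤ M)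
    (t : Fin n → ℝ) (ht_pos : ∀ i, 0 < t i) (ht_sum : ∑ i, t i = 1)
    (ν : ℝ) (hν : 1 ≤ ν)
    (hnorm : ∑ i, (t i / ν + max 0 (1 / (M : ℝ) - t i / ν)) = 1)
    (ta : Fin n → ℝ)
    (hopt : ∀ c' : Fin n → ℕ, ∑ i, c' i = M →
      Dkl t ta ≤ Dkl t (fun i => (c' i : ℝ) / M)) :
    Dkl t ta ≤
      ((Real.log ν + Real.log 2 / 2 * (1 - ν * (1 - (n : ℝ) / M)) : ℝ) : EReal) := by
  have hM : 0 < M := hn.trans_le hnM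
  have hν₀ : 0 < ν := one_pos.trans_le hν
  have hnorm' : ∑ i, max (t i / ν) (1 / (M : ℝ)) = 1 := by
    simpa only [add_max, add_zero, add_sub_cancel] using hnorm
  obtain ⟨c, hcsum, hc₁, hclog⟩ := exists_mType_sum_mul_log_le hM ht_pos hν₀ hnorm'
  set B := unclipped t ν M
  have hclipped : M - M / ν ≤ #Bᶜ :=
    sub_div_le_card_compl_unclipped hν₀ (fun i => (ht_pos i).le) ht_sum hnorm'
  have hcard : (#B : ℝ) = n - #Bᶜ := by
    rw [eq_sub_iff_add_eq, ← Nat.cast_add, card_add_card_compl, Fintype.card_fin]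
  have hB : ν / M * #B ≤ 1 - ν * (1 - n / M) := calc
    ν / M * #B ≤ ν / M * (n - (M - M / ν)) := by rw [hcard]; gcongr
    _ = 1 - ν * (1 - n / M) := by field_simp; ring
  refine (hopt c hcsum).trans ?_
  rw [Dkl_eq_sum_of_pos ht_pos fun i => div_pos (by exact_mod_cast hc₁ i) (by positivity)]
  refine EReal.coe_le_coe_iff.mpr (hclog.trans ?_)
  have hlog₂ : 1 / 2 < log 2 := by linarith [log_two_gt_d9]
  have hB₀ : 0 ≤ ν / M * #B := by positivity
  rw [ht_sum, one_mul]
  nlinarith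

theorem approximation_bound
    {n M : ℕ} (hn : 0 < n) (hnM : n ≤ M)
    (t : Fin n → ℝ) (ht_pos : ∀ i, 0 < t i) (ht_sum : ∑ i, t i = 1)
    (ν : ℝ) (hν : 1 ≤ ν)
    (hnorm : ∑ i, (t i / ν + max 0 (1 / (M : ℝ) - t i / ν)) = 1)
    (c : Fin n → ℕ) (hc : ∑ i, c i = M)
    (ta : Fin n → ℝ) (hta : ∀ i, ta i = (c i : ℝ) / M)
    (hopt : ∀ c' : Fin n → ℕ, ∑ i, c' i = M →
      Dkl t ta ≤ Dkl t (fun i => (c' i : ℝ) / M)) :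
    Dkl t ta ≤
      ((Real.log ν + Real.log 2 / 2 * (1 - ν * (1 - (n : ℝ) / M)) : ℝ) : EReal) :=
  approximation_bound_general hn hnM t ht_pos ht_sum ν hν hnorm ta hopt
end

section
/- Let δ_1,...,δ_n : ℕ → ℝ be non-decreasing functions, and suppose c = (c_1,...,c_n) ∈ ℕ₀^n with Σ c_i = M satisfies: for all indices ℓ, m, if c_m > 0 then δ_ℓ(c_ℓ + 1) ≥ δ_m(c_m). Then c minimizes U(c') = Σ_i Σ_{k=1}^{c'_i} δ_i(k) over all c' ∈ ℕ₀^n with Σ c'_i = M. -/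
open Finset

theorem local_opt_implies_global_opt
    {n M : ℕ} (δ : Fin n → ℕ → ℝ)
    (hδ : ∀ i, ∀ k l : ℕ, 1 ≤ k → k ≤ l → δ i k ≤ δ i l)
    (c : Fin n → ℕ) (hc : ∑ i, c i = M)
    (hloc : ∀ l m : Fin n, 0 < c m → δ m (c m) ≤ δ l (c l + 1)) :
    ∀ c' : Fin n → ℕ, ∑ i, c' i = M → allocCost δ c ≤ allocCost δ c' := by
  suffices h : ∀ K : ℕ, ∀ c' : Fin n → ℕ, ∑ i, c' i = M →
      ∑ i, (c' i - c i) = K → allocCost δ c ≤ allocCost δ c' by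
    intro c' hc'
    exact h _ c' hc' rfl
  intro K
  induction K using Nat.strong_induction_on with
  | _ K ih =>
    intro c' hc' hK
    rcases Nat.eq_zero_or_pos K with hK0 | hKpos
    · -- base case: c' = c
      subst hK0
      have hle : ∀ i, c' i ≤ c i := by
        intro i
        have := Finset.sum_eq_zero_iff.mp hK i (mem_univ i)
        omega
      have hcc : c' = c := by
        funext i
        refine le_antisymm (hle i) ?_
        by_contra hlt
        push_neg at hlt
        have : ∑ j, c' j < ∑ j, c j :=
          Finset.sum_lt_sum (fun j _ => hle j) ⟨i, mem_univ i, hlt⟩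
        omega
      rw [hcc]
    · -- inductive step: exchange argument
      have hex : ∃ l, c l < c' l := by
        by_contra h
        push_neg at h
        have : ∀ i ∈ univ, c' i - c i = 0 := fun i _ => by have := h i; omega
        rw [Finset.sum_eq_zero this] at hK
        omega
      obtain ⟨l, hl⟩ := hex
      have hexm : ∃ m, c' m < c m := by
        by_contra h
        push_neg at h
        have : ∑ j, c j < ∑ j, c' j :=
          Finset.sum_lt_sum (fun j _ => h j) ⟨l, mem_univ l, hl⟩
        omega
      obtain ⟨m, hm⟩ := hexm
      have hlm : l ≠ m := by
        intro h; rw [h] at hl; omega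
      obtain ⟨t, ht⟩ : ∃ t, c' l = t + 1 := ⟨c' l - 1, by omega⟩
      set c'' : Fin n → ℕ := Function.update (Function.update c' l t) m (c' m + 1) with hc''
      have hml : c'' l = t := by
        rw [hc'', Function.update_of_ne hlm, Function.update_self]
      have hmm : c'' m = c' m + 1 := by
        rw [hc'', Function.update_self]
      have hother : ∀ i, i ≠ l → i ≠ m → c'' i = c' i := by
        intro i hil him
        rw [hc'', Function.update_of_ne him, Function.update_of_ne hil]
      -- decomposition of sums
      have hlmem : l ∈ univ.erase m := mem_erase.mpr ⟨hlm, mem_univ l⟩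
      set s : Finset (Fin n) := (univ.erase m).erase l with hs
      have hdm : ∀ {β : Type} [AddCommMonoid β] (f : Fin n → β),
          ∑ i, f i = f m + (f l + ∑ i ∈ s, f i) := by
        intro β _ f
        rw [hs, ← Finset.add_sum_erase _ f (mem_univ m), ← Finset.add_sum_erase _ f hlmem]
      have hsmem : ∀ i ∈ s, i ≠ l ∧ i ≠ m := by
        intro i hi
        rw [hs] at hi
        exact ⟨(mem_erase.mp hi).1, (mem_erase.mp (mem_erase.mp hi).2).1⟩
      -- c'' has the same total
      have hrest : ∑ i ∈ s, c'' i = ∑ i ∈ s, c' i :=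
        Finset.sum_congr rfl fun i hi => hother i (hsmem i hi).1 (hsmem i hi).2
      have hsum'' : ∑ i, c'' i = M := by
        rw [hdm c'', hmm, hml, hrest]
        rw [hdm c'] at hc'
        omega
      -- the measure decreases
      have hmeas : ∑ i, (c'' i - c i) = K - 1 := by
        have hrest2 : ∑ i ∈ s, (c'' i - c i) = ∑ i ∈ s, (c' i - c i) :=
          Finset.sum_congr rfl fun i hi => by
            rw [hother i (hsmem i hi).1 (hsmem i hi).2]
        rw [hdm (fun i => c'' i - c i), hmm, hml, hrest2]
        rw [hdm (fun i => c' i - c i)] at hK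
        omega
      -- the cost does not increase
      have hrest3 : ∑ i ∈ s, ∑ k ∈ Finset.Icc 1 (c'' i), δ i k
          = ∑ i ∈ s, ∑ k ∈ Finset.Icc 1 (c' i), δ i k :=
        Finset.sum_congr rfl fun i hi => by
          rw [hother i (hsmem i hi).1 (hsmem i hi).2]
      have hFm : ∑ k ∈ Finset.Icc 1 (c' m + 1), δ m k
          = (∑ k ∈ Finset.Icc 1 (c' m), δ m k) + δ m (c' m + 1) :=
        Finset.sum_Icc_succ_top (by omega) _
      have hFl : ∑ k ∈ Finset.Icc 1 (t + 1), δ l k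
          = (∑ k ∈ Finset.Icc 1 t, δ l k) + δ l (t + 1) :=
        Finset.sum_Icc_succ_top (by omega) _
      have hstep : δ m (c' m + 1) ≤ δ l (t + 1) := by
        calc δ m (c' m + 1) ≤ δ m (c m) := hδ m _ _ (by omega) (by omega)
          _ ≤ δ l (c l + 1) := hloc l m (by omega)
          _ ≤ δ l (t + 1) := hδ l _ _ (by omega) (by omega)
      have hcost : allocCost δ c'' ≤ allocCost δ c' := by
        rw [allocCost, allocCost,
          hdm (fun i => ∑ k ∈ Finset.Icc 1 (c'' i), δ i k),
          hdm (fun i => ∑ k ∈ Finset.Icc 1 (c' i), δ i k)]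
        simp only [hmm, hml, hrest3, ht, hFm, hFl]
        linarith
      exact le_trans (ih (K - 1) (by omega) c'' hsum'' hmeas) hcost
end
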